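/- arXiv:2410.23250 — 3 statements merged into one kernel-verified Lean document; each statement's English description precedes it below -/
import Mathlib

section
/- (Quantitative Reimer identity) Let A, B ⊆ {0,1}^n be increasing events with P[A ∘ B] > 0 and let F(x,y) be the indicator that (A,B) occurs disjointly on (x,y). Then P[A ∘ B] = P[A ∩ B̄]·e^{−J}, where J = (1/2) ∫_0^1 ∑_{i=1}^n E[D_iF(ω, ω_t)] / E[F(ω, ω_t)] dt, with D_iF(x,y) = [F(x^i,y_i) − F(x_i,y_i)]·[F(x_i,y^i) − F(x_i,y_i)]. -/
open Finset

/-- `(x, I)` is a witness for `A`: every configuration agreeing with `x` on `I` lies in `A`. -/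
def IsWitness {n : ℕ} (A : Set (Fin n → Bool)) (x : Fin n → Bool) (I : Finset (Fin n)) : Prop :=
  ∀ y : Fin n → Bool, (∀ i ∈ I, y i = x i) → y ∈ A

/-- `(A, B)` occurs disjointly on `(x, y)`: there are disjoint witness sets `I` for `A` in `x`
and `J` for `B` in `y`. -/
def OccursDisjointly {n : ℕ} (A B : Set (Fin n → Bool)) (x y : Fin n → Bool) : Prop :=
  ∃ I J : Finset (Fin n), Disjoint I J ∧ IsWitness A x I ∧ IsWitness B y J

/-- An event is increasing if it is upward closed in the coordinatewise order. -/
def IncreasingEvent {n : ℕ} (A : Set (Fin n → Bool)) : Prop :=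
  ∀ x y : Fin n → Bool, (∀ i, x i ≤ y i) → x ∈ A → y ∈ A

/-- Coordinatewise colour flip. -/
def flipConf {n : ℕ} (x : Fin n → Bool) : Fin n → Bool := fun i => !(x i)

/-- `B̄ = {x̄ : x ∈ B}`. -/
def flipSet {n : ℕ} (B : Set (Fin n → Bool)) : Set (Fin n → Bool) := flipConf '' B

open Function

attribute [local instance] Classical.propDecidable

/-- The disjoint occurrence event `A ∘ B`. -/
def disjOcc {n : ℕ} (A B : Set (Fin n → Bool)) : Set (Fin n → Bool) :=
  {x | OccursDisjointly A B x x}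

/-- Uniform probability of an event on `{0,1}^n`. -/
noncomputable def Pr {n : ℕ} (A : Set (Fin n → Bool)) : ℝ :=
  ((Finset.univ.filter fun x => x ∈ A).card : ℝ) / 2 ^ n

/-- Joint law of `(ω, ω_t)`. -/
noncomputable def flipWeight (n : ℕ) (t : ℝ) (x y : Fin n → Bool) : ℝ :=
  (1 / 2 ^ n) * ∏ i, (if x i = y i then 1 - t else t)

/-- Expectation `E[H(ω, ω_t)]`. -/
noncomputable def Ept (n : ℕ) (t : ℝ) (H : (Fin n → Bool) → (Fin n → Bool) → ℝ) : ℝ :=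
  ∑ x : Fin n → Bool, ∑ y : Fin n → Bool, flipWeight n t x y * H x y

/-- Indicator of the event that `(A,B)` occurs disjointly on `(x,y)`. -/
noncomputable def indDisj {n : ℕ} (A B : Set (Fin n → Bool)) (x y : Fin n → Bool) : ℝ :=
  if OccursDisjointly A B x y then 1 else 0

/-- `D_i F`. -/
def Dop {n : ℕ} (F : (Fin n → Bool) → (Fin n → Bool) → ℝ) (i : Fin n)
    (x y : Fin n → Bool) : ℝ :=
  (F (update x i true) (update y i false) - F (update x i false) (update y i false))
    * (F (update x i false) (update y i true) - F (update x i false) (update y i false))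

section Lemmas

variable {n : ℕ} {A B : Set (Fin n → Bool)}

lemma isWitness_congr {x x' : Fin n → Bool} {I : Finset (Fin n)}
    (h : IsWitness A x I) (hx : ∀ j ∈ I, x' j = x j) : IsWitness A x' I :=
  fun z hz => h z fun i hi => (hz i hi).trans (hx i hi)

lemma isWitness_mono (hA : IncreasingEvent A) {x x' : Fin n → Bool}
    {I : Finset (Fin n)} (h : IsWitness A x I) (hx : ∀ j, x j ≤ x' j) :
    IsWitness A x' I := by
  intro z hz
  have hmem : (fun j => if j ∈ I then x j else z j) ∈ A := h _ (fun i hi => by simp [hi])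
  refine hA _ _ (fun j => ?_) hmem
  by_cases hj : j ∈ I
  · simpa [hj, hz j hj] using hx j
  · simp [hj]

lemma occurs_mono_left (hA : IncreasingEvent A) {x x' y : Fin n → Bool}
    (hx : ∀ j, x j ≤ x' j) (h : OccursDisjointly A B x y) :
    OccursDisjointly A B x' y := by
  obtain ⟨I, J, hd, hI, hJ⟩ := h
  exact ⟨I, J, hd, isWitness_mono hA hI hx, hJ⟩

lemma occurs_mono_right (hB : IncreasingEvent B) {x y y' : Fin n → Bool}
    (hy : ∀ j, y j ≤ y' j) (h : OccursDisjointly A B x y) :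
    OccursDisjointly A B x y' := by
  obtain ⟨I, J, hd, hI, hJ⟩ := h
  exact ⟨I, J, hd, hI, isWitness_mono hB hJ hy⟩

lemma update_le_update {x : Fin n → Bool} (i : Fin n) :
    ∀ j, update x i false j ≤ update x i true j := by
  intro j
  rcases eq_or_ne j i with rfl | h
  · simp
  · simp [update_of_ne h]

lemma occurs_split {x y : Fin n → Bool} (i : Fin n)
    (h : OccursDisjointly A B (update x i true) (update y i true)) :
    OccursDisjointly A B (update x i true) (update y i false) ∨
      OccursDisjointly A B (update x i false) (update y i true) := by
  obtain ⟨I, J, hd, hI, hJ⟩ := h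
  by_cases hi : i ∈ J
  · have hiI : i ∉ I := fun hiI => (Finset.disjoint_left.1 hd hiI) hi
    refine Or.inr ⟨I, J, hd, isWitness_congr hI ?_, hJ⟩
    intro j hj
    have : j ≠ i := fun hji => hiI (hji ▸ hj)
    simp [update_of_ne this]
  · refine Or.inl ⟨I, J, hd, hI, isWitness_congr hJ ?_⟩
    intro j hj
    have : j ≠ i := fun hji => hi (hji ▸ hj)
    simp [update_of_ne this]

end Lemmas

section Key

variable {n : ℕ} {A B : Set (Fin n → Bool)}
open Function

lemma abstract_key (P00 P10 P01 P11 : Prop)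
    (h1 : P00 → P10) (h2 : P00 → P01) (h4 : P10 → P11) (h5 : P01 → P11)
    (h3 : P11 → P10 ∨ P01) :
    (if P10 then (1:ℝ) else 0) + (if P01 then (1:ℝ) else 0)
      - (if P00 then (1:ℝ) else 0) - (if P11 then (1:ℝ) else 0)
    = ((if P10 then (1:ℝ) else 0) - (if P00 then (1:ℝ) else 0))
        * ((if P01 then (1:ℝ) else 0) - (if P00 then (1:ℝ) else 0)) := by
  by_cases p00 : P00 <;> by_cases p10 : P10 <;> by_cases p01 : P01 <;> by_cases p11 : P11 <;>
    simp_all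

lemma key_identity (hA : IncreasingEvent A) (hB : IncreasingEvent B) (i : Fin n)
    (x y : Fin n → Bool) :
    indDisj A B (update x i true) (update y i false)
      + indDisj A B (update x i false) (update y i true)
      - indDisj A B (update x i false) (update y i false)
      - indDisj A B (update x i true) (update y i true)
    = Dop (indDisj A B) i x y := by
  unfold Dop
  have h1 : OccursDisjointly A B (update x i false) (update y i false) →
      OccursDisjointly A B (update x i true) (update y i false) :=
    occurs_mono_left hA (update_le_update i)
  have h2 : OccursDisjointly A B (update x i false) (update y i false) →
      OccursDisjointly A B (update x i false) (update y i true) :=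
    occurs_mono_right hB (update_le_update i)
  have h4 : OccursDisjointly A B (update x i true) (update y i false) →
      OccursDisjointly A B (update x i true) (update y i true) :=
    occurs_mono_right hB (update_le_update i)
  have h5 : OccursDisjointly A B (update x i false) (update y i true) →
      OccursDisjointly A B (update x i true) (update y i true) :=
    occurs_mono_left hA (update_le_update i)
  have h3 : OccursDisjointly A B (update x i true) (update y i true) →
      OccursDisjointly A B (update x i true) (update y i false) ∨
        OccursDisjointly A B (update x i false) (update y i true) := occurs_split i
  unfold indDisj
  exact abstract_key _ _ _ _ h1 h2 h4 h5 h3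

lemma indDisj_le {x x' y y' : Fin n → Bool}
    (h : OccursDisjointly A B x y → OccursDisjointly A B x' y') :
    indDisj A B x y ≤ indDisj A B x' y' := by
  unfold indDisj
  by_cases hp : OccursDisjointly A B x y
  · simp [hp, h hp]
  · simp [hp]
    positivity

lemma dop_nonneg (hA : IncreasingEvent A) (hB : IncreasingEvent B) (i : Fin n)
    (x y : Fin n → Bool) : 0 ≤ Dop (indDisj A B) i x y := by
  unfold Dop
  apply mul_nonneg <;> rw [sub_nonneg]
  · exact indDisj_le (occurs_mono_left hA (update_le_update i))
  · exact indDisj_le (occurs_mono_right hB (update_le_update i))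

end Key

section Sums

variable {n : ℕ}
open Function

lemma sum_split (i : Fin n) (f : (Fin n → Bool) → ℝ) :
    ∑ x : Fin n → Bool, f x
      = (1/2) * ∑ x : Fin n → Bool, (f (update x i false) + f (update x i true)) := by
  have h1 : ∀ x : Fin n → Bool, f (update x i false) + f (update x i true)
      = f x + f (update x i (!(x i))) := by
    intro x
    cases h : x i
    · rw [show update x i false = x by rw [← h]; exact update_eq_self i x]
      simp [h]
    · rw [show update x i true = x by rw [← h]; exact update_eq_self i x]
      simp [h, add_comm]
  have hbij : Function.Bijective (fun x : Fin n → Bool => update x i (!(x i))) := by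
    apply Function.Involutive.bijective
    intro x
    funext j
    rcases eq_or_ne j i with rfl | hj
    · simp
    · simp [update_of_ne hj]
  have h3 : ∑ x : Fin n → Bool, f (update x i (!(x i))) = ∑ x : Fin n → Bool, f x :=
    Function.Bijective.sum_comp hbij f
  calc ∑ x : Fin n → Bool, f x
      = (1/2) * (∑ x : Fin n → Bool, f x + ∑ x : Fin n → Bool, f (update x i (!(x i)))) := by
        rw [h3]; ring
    _ = (1/2) * ∑ x : Fin n → Bool, (f x + f (update x i (!(x i)))) := by
        rw [Finset.sum_add_distrib]
    _ = (1/2) * ∑ x : Fin n → Bool, (f (update x i false) + f (update x i true)) := by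
        congr 1
        exact Finset.sum_congr rfl fun x _ => (h1 x).symm

lemma sum_split2 (i : Fin n) (f : (Fin n → Bool) → (Fin n → Bool) → ℝ) :
    ∑ x : Fin n → Bool, ∑ y : Fin n → Bool, f x y
      = (1/4) * ∑ x : Fin n → Bool, ∑ y : Fin n → Bool,
          (f (update x i false) (update y i false) + f (update x i false) (update y i true)
           + f (update x i true) (update y i false) + f (update x i true) (update y i true)) := by
  rw [sum_split i (fun x => ∑ y, f x y)]
  have h : ∀ x : Fin n → Bool,
      (∑ y, f (update x i false) y) + ∑ y, f (update x i true) y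
        = (1/2) * ∑ y : Fin n → Bool,
            (f (update x i false) (update y i false) + f (update x i false) (update y i true)
             + f (update x i true) (update y i false) + f (update x i true) (update y i true)) := by
    intro x
    rw [sum_split i (f (update x i false)), sum_split i (f (update x i true)), ← mul_add,
      ← Finset.sum_add_distrib]
    congr 1
    exact Finset.sum_congr rfl fun y _ => by ring
  rw [Finset.sum_congr rfl fun x _ => h x, ← Finset.mul_sum]
  ring

lemma continuous_Ept (H : (Fin n → Bool) → (Fin n → Bool) → ℝ) :
    Continuous fun t => Ept n t H := by
  unfold Ept flipWeight
  refine continuous_finset_sum _ fun x _ => continuous_finset_sum _ fun y _ => ?_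
  refine Continuous.mul (Continuous.mul continuous_const
    (continuous_finset_prod _ fun i _ => ?_)) continuous_const
  by_cases h : x i = y i <;> simp only [h, if_true, if_false]
  · exact continuous_const.sub continuous_id
  · exact continuous_id

lemma hasDerivAt_Ept (H : (Fin n → Bool) → (Fin n → Bool) → ℝ) (t : ℝ) :
    HasDerivAt (fun t => Ept n t H)
      (∑ x : Fin n → Bool, ∑ y : Fin n → Bool, (1 / 2 ^ n : ℝ) *
        ((∑ i, (∏ j ∈ Finset.univ.erase i, (if x j = y j then 1 - t else t)) *
          (if x i = y i then (-1:ℝ) else 1)) * H x y)) t := by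
  unfold Ept flipWeight
  refine HasDerivAt.fun_sum fun x _ => HasDerivAt.fun_sum fun y _ => ?_
  have hp : HasDerivAt (fun t => ∏ i, (if x i = y i then 1 - t else t))
      (∑ i, (∏ j ∈ Finset.univ.erase i, (if x j = y j then 1 - t else t)) *
        (if x i = y i then (-1:ℝ) else 1)) t := by
    have hfac : ∀ i ∈ Finset.univ, HasDerivAt
        (fun t : ℝ => if x i = y i then 1 - t else t)
        (if x i = y i then (-1:ℝ) else 1) t := by
      intro i _
      by_cases h : x i = y i <;> simp only [h, if_true, if_false]
      · simpa using (hasDerivAt_id t).const_sub 1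
      · exact hasDerivAt_id t
    have := HasDerivAt.fun_finsetProd hfac
    simpa [smul_eq_mul] using this
  have h2 := (hp.const_mul (1 / 2 ^ n : ℝ)).mul_const (H x y)
  convert h2 using 1
  · rfl
  ring

end Sums

section PerI

variable {n : ℕ} {A B : Set (Fin n → Bool)}
open Function

lemma per_i (hA : IncreasingEvent A) (hB : IncreasingEvent B) (i : Fin n) (t : ℝ) :
    ∑ x : Fin n → Bool, ∑ y : Fin n → Bool, (1 / 2 ^ n : ℝ) *
        ((∏ j ∈ Finset.univ.erase i, (if x j = y j then 1 - t else t)) *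
          ((if x i = y i then (-1:ℝ) else 1) * indDisj A B x y))
      = (1/2) * Ept n t (Dop (indDisj A B) i) := by
  have hprod : ∀ (u v : Fin n → Bool) (bx by_ : Bool),
      (∏ j ∈ Finset.univ.erase i,
          (if update u i bx j = update v i by_ j then 1 - t else t))
        = ∏ j ∈ Finset.univ.erase i, (if u j = v j then 1 - t else t) := by
    intro u v bx by_
    refine Finset.prod_congr rfl fun j hj => ?_
    have hji : j ≠ i := Finset.ne_of_mem_erase hj
    rw [update_of_ne hji, update_of_ne hji]
  have hDop : ∀ (x y : Fin n → Bool) (bx by_ : Bool),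
      Dop (indDisj A B) i (update x i bx) (update y i by_) = Dop (indDisj A B) i x y := by
    intro x y bx by_; unfold Dop; simp only [update_idem]
  have hR : Ept n t (Dop (indDisj A B) i)
      = (1/4) * ∑ x : Fin n → Bool, ∑ y : Fin n → Bool,
          (flipWeight n t (update x i false) (update y i false)
              * Dop (indDisj A B) i (update x i false) (update y i false)
            + flipWeight n t (update x i false) (update y i true)
              * Dop (indDisj A B) i (update x i false) (update y i true)
            + flipWeight n t (update x i true) (update y i false)
              * Dop (indDisj A B) i (update x i true) (update y i false)
            + flipWeight n t (update x i true) (update y i true)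
              * Dop (indDisj A B) i (update x i true) (update y i true)) := by
    exact sum_split2 i _
  rw [sum_split2 i, hR]
  have hW : ∀ (u v : Fin n → Bool), flipWeight n t u v
      = (1 / 2 ^ n : ℝ) * ((if u i = v i then 1 - t else t)
          * ∏ j ∈ Finset.univ.erase i, (if u j = v j then 1 - t else t)) := by
    intro u v
    unfold flipWeight
    rw [← Finset.mul_prod_erase Finset.univ _ (Finset.mem_univ i)]
  have hpt : ∀ x y : Fin n → Bool,
      ((1 / 2 ^ n : ℝ) *
        ((∏ j ∈ Finset.univ.erase i,
            (if update x i false j = update y i false j then 1 - t else t)) *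
          ((if update x i false i = update y i false i then (-1:ℝ) else 1)
            * indDisj A B (update x i false) (update y i false)))
       + (1 / 2 ^ n : ℝ) *
        ((∏ j ∈ Finset.univ.erase i,
            (if update x i false j = update y i true j then 1 - t else t)) *
          ((if update x i false i = update y i true i then (-1:ℝ) else 1)
            * indDisj A B (update x i false) (update y i true)))
       + (1 / 2 ^ n : ℝ) *
        ((∏ j ∈ Finset.univ.erase i,
            (if update x i true j = update y i false j then 1 - t else t)) *
          ((if update x i true i = update y i false i then (-1:ℝ) else 1)
            * indDisj A B (update x i true) (update y i false)))
       + (1 / 2 ^ n : ℝ) *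
        ((∏ j ∈ Finset.univ.erase i,
            (if update x i true j = update y i true j then 1 - t else t)) *
          ((if update x i true i = update y i true i then (-1:ℝ) else 1)
            * indDisj A B (update x i true) (update y i true))))
      = (1/2) * (flipWeight n t (update x i false) (update y i false)
              * Dop (indDisj A B) i (update x i false) (update y i false)
            + flipWeight n t (update x i false) (update y i true)
              * Dop (indDisj A B) i (update x i false) (update y i true)
            + flipWeight n t (update x i true) (update y i false)
              * Dop (indDisj A B) i (update x i true) (update y i false)
            + flipWeight n t (update x i true) (update y i true)
              * Dop (indDisj A B) i (update x i true) (update y i true)) := by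
    intro x y
    have key := key_identity hA hB i x y
    simp only [hprod, hDop, hW, Function.update_self]
    norm_num
    linear_combination (1 / 2 ^ n *
      (∏ j ∈ Finset.univ.erase i, (if x j = y j then 1 - t else t))) * key
  calc (1/4 : ℝ) * ∑ x : Fin n → Bool, ∑ y : Fin n → Bool, _
      = (1/4 : ℝ) * ∑ x : Fin n → Bool, ∑ y : Fin n → Bool, (1/2 : ℝ) * _ := by
        rw [Finset.sum_congr rfl fun x _ => Finset.sum_congr rfl fun y _ => hpt x y]
    _ = _ := by
        simp only [← Finset.mul_sum]
        ring

end PerI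

section DerivG

variable {n : ℕ} {A B : Set (Fin n → Bool)}
open Function

lemma hasDerivAt_g (hA : IncreasingEvent A) (hB : IncreasingEvent B) (t : ℝ) :
    HasDerivAt (fun t => Ept n t (indDisj A B))
      ((1/2) * ∑ i, Ept n t (Dop (indDisj A B) i)) t := by
  have h := hasDerivAt_Ept (indDisj A B) t
  have heq : (∑ x : Fin n → Bool, ∑ y : Fin n → Bool, (1 / 2 ^ n : ℝ) *
        ((∑ i, (∏ j ∈ Finset.univ.erase i, (if x j = y j then 1 - t else t)) *
          (if x i = y i then (-1:ℝ) else 1)) * indDisj A B x y))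
      = (1/2) * ∑ i, Ept n t (Dop (indDisj A B) i) := by
    have h1 : ∀ x y : Fin n → Bool, (1 / 2 ^ n : ℝ) *
        ((∑ i, (∏ j ∈ Finset.univ.erase i, (if x j = y j then 1 - t else t)) *
          (if x i = y i then (-1:ℝ) else 1)) * indDisj A B x y)
        = ∑ i, (1 / 2 ^ n : ℝ) *
            ((∏ j ∈ Finset.univ.erase i, (if x j = y j then 1 - t else t)) *
              ((if x i = y i then (-1:ℝ) else 1) * indDisj A B x y)) := by
      intro x y
      rw [Finset.sum_mul, Finset.mul_sum]
      exact Finset.sum_congr rfl fun i _ => by ring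
    rw [Finset.sum_congr rfl fun x _ => Finset.sum_congr rfl fun y _ => h1 x y]
    rw [Finset.sum_congr rfl fun x (_ : x ∈ Finset.univ) => Finset.sum_comm]
    rw [Finset.sum_comm]
    rw [Finset.sum_congr rfl fun i (_ : i ∈ Finset.univ) => per_i hA hB i t]
    rw [Finset.mul_sum]
  rw [← heq]
  exact h

end DerivG

section Endpoints

variable {n : ℕ} {A B : Set (Fin n → Bool)}
open Function

lemma sum_ind_eq_Pr (S : Set (Fin n → Bool)) :
    ∑ x : Fin n → Bool, (1 / 2 ^ n : ℝ) * (if x ∈ S then 1 else 0) = Pr S := by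
  rw [← Finset.mul_sum, Finset.sum_boole]
  unfold Pr
  ring

lemma Ept_zero : Ept n 0 (indDisj A B) = Pr (disjOcc A B) := by
  unfold Ept flipWeight
  have h1 : ∀ x y : Fin n → Bool,
      (∏ i, (if x i = y i then (1:ℝ) - 0 else 0)) = if y = x then 1 else 0 := by
    intro x y
    by_cases h : y = x
    · subst h; simp
    · rw [if_neg h]
      obtain ⟨i, hi⟩ : ∃ i, ¬ x i = y i := by
        by_contra hc; push_neg at hc
        exact h (funext fun i => (hc i).symm)
      exact Finset.prod_eq_zero (Finset.mem_univ i) (by simp [hi])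
  have h2 : ∀ x : Fin n → Bool,
      (∑ y : Fin n → Bool, (1 / 2 ^ n : ℝ) *
          (∏ i, (if x i = y i then (1:ℝ) - 0 else 0)) * indDisj A B x y)
        = (1 / 2 ^ n : ℝ) * indDisj A B x x := by
    intro x
    rw [Finset.sum_congr rfl fun y _ => by rw [h1 x y]]
    rw [Finset.sum_congr rfl fun y _ =>
      show (1/2^n : ℝ) * (if y = x then 1 else 0) * indDisj A B x y
          = if y = x then (1/2^n : ℝ) * indDisj A B x y else 0 from by
        by_cases h : y = x <;> simp [h]]
    rw [Finset.sum_ite_eq' Finset.univ x (fun y => (1/2^n : ℝ) * indDisj A B x y)]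
    simp
  rw [Finset.sum_congr rfl fun x _ => h2 x]
  have h3 : ∀ x : Fin n → Bool, indDisj A B x x = if x ∈ disjOcc A B then (1:ℝ) else 0 := by
    intro x
    unfold indDisj disjOcc
    simp only [Set.mem_setOf_eq]
  rw [Finset.sum_congr rfl fun x _ => by rw [h3 x]]
  exact sum_ind_eq_Pr _

lemma occurs_flip_iff (hA : IncreasingEvent A) (hB : IncreasingEvent B) (x : Fin n → Bool) :
    OccursDisjointly A B x (flipConf x) ↔ x ∈ A ∩ flipSet B := by
  constructor
  · rintro ⟨I, J, hd, hI, hJ⟩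
    refine ⟨hI x fun _ _ => rfl, ⟨flipConf x, hJ (flipConf x) fun _ _ => rfl, ?_⟩⟩
    funext i; simp [flipConf]
  · rintro ⟨hxA, z, hzB, hzx⟩
    refine ⟨Finset.univ.filter (fun j => x j = true),
            Finset.univ.filter (fun j => x j = false), ?_, ?_, ?_⟩
    · rw [Finset.disjoint_left]
      intro a ha hb
      simp only [Finset.mem_filter] at ha hb
      rw [ha.2] at hb
      exact Bool.noConfusion hb.2
    · intro w hw
      refine hA x w (fun j => ?_) hxA
      by_cases hj : x j = true
      · rw [hw j (by simp [hj]), hj]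
      · have : x j = false := by simpa using hj
        simp [this]
    · intro w hw
      have hfB : flipConf x ∈ B := by
        have hzz : flipConf x = z := by
          rw [← hzx]; funext i; simp [flipConf]
        rw [hzz]; exact hzB
      refine hB (flipConf x) w (fun j => ?_) hfB
      by_cases hj : x j = false
      · rw [hw j (by simp [hj])]
      · have hxt : x j = true := by simpa using hj
        simp [flipConf, hxt]

lemma Ept_one (hA : IncreasingEvent A) (hB : IncreasingEvent B) :
    Ept n 1 (indDisj A B) = Pr (A ∩ flipSet B) := by
  unfold Ept flipWeight
  have h1 : ∀ x y : Fin n → Bool,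
      (∏ i, (if x i = y i then (1:ℝ) - 1 else 1)) = if y = flipConf x then 1 else 0 := by
    intro x y
    by_cases h : y = flipConf x
    · subst h
      rw [if_pos rfl]
      refine Finset.prod_eq_one fun i _ => ?_
      have : ¬ (x i = flipConf x i) := by cases hxi : x i <;> simp [flipConf, hxi]
      simp [this]
    · rw [if_neg h]
      obtain ⟨i, hi⟩ : ∃ i, ¬ y i = flipConf x i := by
        by_contra hc; push_neg at hc
        exact h (funext fun i => hc i)
      have hxy : x i = y i := by
        revert hi; cases hxi : x i <;> cases hyi : y i <;> simp [flipConf, hxi, hyi]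
      exact Finset.prod_eq_zero (Finset.mem_univ i) (by simp [hxy])
  have h2 : ∀ x : Fin n → Bool,
      (∑ y : Fin n → Bool, (1 / 2 ^ n : ℝ) *
          (∏ i, (if x i = y i then (1:ℝ) - 1 else 1)) * indDisj A B x y)
        = (1 / 2 ^ n : ℝ) * indDisj A B x (flipConf x) := by
    intro x
    rw [Finset.sum_congr rfl fun y _ => by rw [h1 x y]]
    rw [Finset.sum_congr rfl fun y _ =>
      show (1/2^n : ℝ) * (if y = flipConf x then 1 else 0) * indDisj A B x y
          = if y = flipConf x then (1/2^n : ℝ) * indDisj A B x y else 0 from by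
        by_cases h : y = flipConf x <;> simp [h]]
    rw [Finset.sum_ite_eq' Finset.univ (flipConf x)
      (fun y => (1/2^n : ℝ) * indDisj A B x y)]
    simp
  rw [Finset.sum_congr rfl fun x _ => h2 x]
  have h3 : ∀ x : Fin n → Bool,
      indDisj A B x (flipConf x)
        = @ite ℝ (x ∈ A ∩ flipSet B) (Classical.propDecidable _) (1:ℝ) 0 := by
    intro x
    unfold indDisj
    by_cases h : OccursDisjointly A B x (flipConf x)
    · rw [if_pos h, if_pos ((occurs_flip_iff hA hB x).1 h)]
    · rw [if_neg h, if_neg (fun hc => h ((occurs_flip_iff hA hB x).2 hc))]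
  rw [Finset.sum_congr rfl fun x _ => by rw [h3 x]]
  exact sum_ind_eq_Pr _

lemma Ept_nonneg {t : ℝ} (h0 : 0 ≤ t) (h1 : t ≤ 1)
    {H : (Fin n → Bool) → (Fin n → Bool) → ℝ} (hH : ∀ x y, 0 ≤ H x y) :
    0 ≤ Ept n t H := by
  unfold Ept flipWeight
  refine Finset.sum_nonneg fun x _ => Finset.sum_nonneg fun y _ => ?_
  refine mul_nonneg (mul_nonneg (by positivity) ?_) (hH x y)
  refine Finset.prod_nonneg fun i _ => ?_
  by_cases h : x i = y i <;> simp [h] <;> linarith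

end Endpoints

section Final

variable {n : ℕ} {A B : Set (Fin n → Bool)}
open Function

lemma g_pos_on (hA : IncreasingEvent A) (hB : IncreasingEvent B)
    (hpos : 0 < Pr (disjOcc A B)) :
    ∀ t ∈ Set.Icc (0:ℝ) 1, 0 < Ept n t (indDisj A B) := by
  have hmono : MonotoneOn (fun t => Ept n t (indDisj A B)) (Set.Icc (0:ℝ) 1) := by
    refine monotoneOn_of_hasDerivWithinAt_nonneg (convex_Icc 0 1)
      ((continuous_Ept _).continuousOn)
      (fun t ht => ((hasDerivAt_g hA hB t).hasDerivWithinAt))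
      (fun t ht => ?_)
    rw [interior_Icc] at ht
    refine mul_nonneg (by norm_num) (Finset.sum_nonneg fun i _ => ?_)
    exact Ept_nonneg (le_of_lt ht.1) (le_of_lt ht.2) (dop_nonneg hA hB i)
  intro t ht
  have h0 : (0:ℝ) ∈ Set.Icc (0:ℝ) 1 := by norm_num
  have := hmono h0 ht ht.1
  calc (0:ℝ) < Ept n 0 (indDisj A B) := by rw [Ept_zero]; exact hpos
    _ ≤ Ept n t (indDisj A B) := this

theorem quantitative_reimer_aux {n : ℕ} (A B : Set (Fin n → Bool))
    (hA : IncreasingEvent A) (hB : IncreasingEvent B)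
    (hpos : 0 < Pr (disjOcc A B)) :
    Pr (disjOcc A B)
      = Pr (A ∩ flipSet B) *
        Real.exp (-((1/2) * ∫ t in (0:ℝ)..1,
          ∑ i : Fin n,
            Ept n t (fun x y => Dop (indDisj A B) i x y)
              / Ept n t (indDisj A B))) := by
  have hgpos := g_pos_on hA hB hpos
  have hg0 : 0 < Ept n 0 (indDisj A B) := hgpos 0 (by norm_num)
  have hg1 : 0 < Ept n 1 (indDisj A B) := hgpos 1 (by norm_num)
  -- log derivative
  have hlog : ∀ t ∈ Set.uIcc (0:ℝ) 1,
      HasDerivAt (fun u => Real.log (Ept n u (indDisj A B)))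
        (((1/2) * ∑ i, Ept n t (Dop (indDisj A B) i)) / Ept n t (indDisj A B)) t := by
    intro t ht
    rw [Set.uIcc_of_le zero_le_one] at ht
    exact (hasDerivAt_g hA hB t).log (ne_of_gt (hgpos t ht))
  have hcontG : Continuous fun t =>
      ((1/2 : ℝ) * ∑ i, Ept n t (Dop (indDisj A B) i)) := by
    exact continuous_const.mul (continuous_finset_sum _ fun i _ => continuous_Ept _)
  have hint : IntervalIntegrable
      (fun t => ((1/2) * ∑ i, Ept n t (Dop (indDisj A B) i)) / Ept n t (indDisj A B))
      MeasureTheory.volume 0 1 := by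
    apply ContinuousOn.intervalIntegrable
    rw [Set.uIcc_of_le zero_le_one]
    exact ContinuousOn.div hcontG.continuousOn (continuous_Ept _).continuousOn
      (fun t ht => ne_of_gt (hgpos t ht))
  have hftc : (∫ t in (0:ℝ)..1,
        ((1/2) * ∑ i, Ept n t (Dop (indDisj A B) i)) / Ept n t (indDisj A B))
      = Real.log (Ept n 1 (indDisj A B)) - Real.log (Ept n 0 (indDisj A B)) :=
    intervalIntegral.integral_eq_sub_of_hasDerivAt hlog hint
  have hcongr : (∫ t in (0:ℝ)..1,
        ∑ i : Fin n, Ept n t (fun x y => Dop (indDisj A B) i x y) / Ept n t (indDisj A B))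
      = ∫ t in (0:ℝ)..1, 2 *
          (((1/2) * ∑ i, Ept n t (Dop (indDisj A B) i)) / Ept n t (indDisj A B)) := by
    refine intervalIntegral.integral_congr fun t _ => ?_
    rw [← Finset.sum_div]
    ring
  have hJ : ((1/2 : ℝ) * ∫ t in (0:ℝ)..1,
        ∑ i : Fin n, Ept n t (fun x y => Dop (indDisj A B) i x y) / Ept n t (indDisj A B))
      = Real.log (Ept n 1 (indDisj A B)) - Real.log (Ept n 0 (indDisj A B)) := by
    rw [hcongr, intervalIntegral.integral_const_mul, ← hftc]
    ring
  rw [← Ept_zero (A := A) (B := B), ← Ept_one hA hB, hJ, neg_sub, Real.exp_sub,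
    Real.exp_log hg0, Real.exp_log hg1]
  field_simp

end Final

/-- Quantitative Reimer identity:
`P[A ∘ B] = P[A ∩ B̄] · e^{-J}` with
`J = (1/2) ∫_0^1 ∑_i E[D_i F(ω, ω_t)] / E[F(ω, ω_t)] dt`. -/
theorem quantitative_reimer {n : ℕ} (A B : Set (Fin n → Bool))
    (hA : IncreasingEvent A) (hB : IncreasingEvent B)
    (hpos : 0 < Pr (disjOcc A B)) :
    Pr (disjOcc A B)
      = Pr (A ∩ flipSet B) *
        Real.exp (-((1/2) * ∫ t in (0:ℝ)..1,
          ∑ i : Fin n,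
            Ept n t (fun x y => Dop (indDisj A B) i x y)
              / Ept n t (indDisj A B))) := by
  exact quantitative_reimer_aux A B hA hB hpos
end

section
/- (Reimer's inequality for increasing events) For increasing events A, B ⊆ {0,1}^n, P[A ∘ B] ≤ P[A ∩ B̄], where A ∘ B denotes disjoint occurrence and B̄ is the coordinatewise colour-flip of B. -/
/-!
Induction on `n`, slicing along the first coordinate: `A_b = {x | (b, x) ∈ A}`. The slice of
`A ∘ B` at `0` lies in `A_0 ∘ B_0`, hence, by monotonicity, in both `C = A_0 ∘ B_1` and
`D = A_1 ∘ B_0`; the slice at `1` lies in `C ∪ D`, since the first coordinate belongs to at most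
one of two disjoint witness sets. Thus `|A ∘ B| ≤ |C ∩ D| + |C ∪ D| = |C| + |D|`, and the
induction hypothesis bounds this by `|A_0 ∩ B̄_1| + |A_1 ∩ B̄_0|`, the sum of the two slices of
`A ∩ B̄` (flipping exchanges the slices of `B`).
-/

open Finset

attribute [local instance] Classical.propDecidable

def headSlice {n : ℕ} (b : Bool) (A : Set (Fin (n + 1) → Bool)) : Set (Fin n → Bool) :=
  {x | Fin.cons b x ∈ A}

lemma ncard_eq_ncard_headSlice_add {n : ℕ} (A : Set (Fin (n + 1) → Bool)) :
    A.ncard = (headSlice false A).ncard + (headSlice true A).ncard := by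
  let cons : Bool → (Fin n → Bool) → Fin (n + 1) → Bool := fun b x => Fin.cons b x
  have hA : A = cons false '' headSlice false A ∪ cons true '' headSlice true A := by
    ext x
    rw [← Fin.cons_self_tail x]
    cases x 0 <;> simp [cons, headSlice]
  have hdisj : Disjoint (cons false '' headSlice false A) (cons true '' headSlice true A) := by
    rw [Set.disjoint_left]
    rintro _ ⟨x, -, rfl⟩ ⟨y, -, h⟩
    simpa [cons] using congrFun h 0
  conv_lhs => rw [hA]
  have hinj (b : Bool) : (cons b).Injective := Fin.cons_right_injective (α := fun _ => Bool) b
  rw [Set.ncard_union_eq hdisj, Set.ncard_image_of_injective _ (hinj false),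
    Set.ncard_image_of_injective _ (hinj true)]

lemma mem_flipSet_iff {n : ℕ} {B : Set (Fin n → Bool)} {x : Fin n → Bool} :
    x ∈ flipSet B ↔ flipConf x ∈ B := by
  have hinv (y : Fin n → Bool) : flipConf (flipConf y) = y := funext fun i => Bool.not_not _
  constructor
  · rintro ⟨y, hy, rfl⟩
    rwa [hinv]
  · exact fun h => ⟨flipConf x, h, hinv x⟩

lemma headSlice_inter_flipSet {n : ℕ} (b : Bool) (A B : Set (Fin (n + 1) → Bool)) :
    headSlice b (A ∩ flipSet B) = headSlice b A ∩ flipSet (headSlice (!b) B) := by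
  have hflip (x : Fin n → Bool) : flipConf (Fin.cons b x) = Fin.cons (!b) (flipConf x) := by
    funext i
    cases i using Fin.cases <;> rfl
  ext x
  simp only [headSlice, Set.mem_inter_iff, mem_flipSet_iff, hflip, Set.mem_ofPred]

lemma IncreasingEvent.headSlice {n : ℕ} {A : Set (Fin (n + 1) → Bool)} (hA : IncreasingEvent A)
    (b : Bool) : IncreasingEvent (headSlice b A) := by
  intro x y hxy hx
  refine hA _ _ (fun i => ?_) hx
  cases i using Fin.cases <;> simp [hxy]

lemma IncreasingEvent.headSlice_false_subset {n : ℕ} {A : Set (Fin (n + 1) → Bool)}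
    (hA : IncreasingEvent A) : _root_.headSlice false A ⊆ _root_.headSlice true A := by
  intro x hx
  refine hA _ _ (fun i => ?_) hx
  cases i using Fin.cases <;> simp

lemma disjOcc_mono {n : ℕ} {A A' B B' : Set (Fin n → Bool)} (hA : A ⊆ A') (hB : B ⊆ B') :
    disjOcc A B ⊆ disjOcc A' B' := by
  rintro x ⟨I, J, hIJ, hI, hJ⟩
  exact ⟨I, J, hIJ, fun y hy => hA (hI y hy), fun y hy => hB (hJ y hy)⟩

def tailIndices {n : ℕ} (I : Finset (Fin (n + 1))) : Finset (Fin n) :=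
  univ.filter fun i => i.succ ∈ I

lemma Disjoint.tailIndices {n : ℕ} {I J : Finset (Fin (n + 1))} (h : Disjoint I J) :
    Disjoint (tailIndices I) (tailIndices J) := by
  simp only [_root_.tailIndices, disjoint_left, mem_filter, mem_univ, true_and] at h ⊢
  exact fun _ hI => h hI

lemma IsWitness.headSlice {n : ℕ} {A : Set (Fin (n + 1) → Bool)} {c : Bool} {x : Fin n → Bool}
    {I : Finset (Fin (n + 1))} (h : IsWitness A (Fin.cons c x) I) {b : Bool}
    (hb : 0 ∈ I → b = c) : IsWitness (headSlice b A) x (tailIndices I) := by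
  intro y hy
  refine h (Fin.cons b y) fun i hi => ?_
  cases i using Fin.cases with
  | zero => simpa using hb hi
  | succ j => simpa using hy j (by simpa [tailIndices] using hi)

lemma mem_disjOcc_headSlice {n : ℕ} {A B : Set (Fin (n + 1) → Bool)} {c : Bool}
    {x : Fin n → Bool} {I J : Finset (Fin (n + 1))} (hIJ : Disjoint I J)
    (hI : IsWitness A (Fin.cons c x) I) (hJ : IsWitness B (Fin.cons c x) J) {a b : Bool}
    (ha : 0 ∈ I → a = c) (hb : 0 ∈ J → b = c) :
    x ∈ disjOcc (headSlice a A) (headSlice b B) :=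
  ⟨_, _, hIJ.tailIndices, hI.headSlice ha, hJ.headSlice hb⟩

lemma headSlice_disjOcc_subset {n : ℕ} (A B : Set (Fin (n + 1) → Bool)) (c : Bool) :
    headSlice c (disjOcc A B) ⊆ disjOcc (headSlice c A) (headSlice c B) := by
  rintro x ⟨I, J, hIJ, hI, hJ⟩
  exact mem_disjOcc_headSlice hIJ hI hJ (fun _ => rfl) (fun _ => rfl)

lemma headSlice_disjOcc_subset_union {n : ℕ} (A B : Set (Fin (n + 1) → Bool)) (c : Bool) :
    headSlice c (disjOcc A B) ⊆
      disjOcc (headSlice (!c) A) (headSlice c B) ∪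
        disjOcc (headSlice c A) (headSlice (!c) B) := by
  rintro x ⟨I, J, hIJ, hI, hJ⟩
  by_cases h0 : (0 : Fin (n + 1)) ∈ J
  · exact Or.inl <| mem_disjOcc_headSlice hIJ hI hJ
      (fun h0I => absurd h0 (disjoint_left.mp hIJ h0I)) (fun _ => rfl)
  · exact Or.inr <| mem_disjOcc_headSlice hIJ hI hJ (fun _ => rfl) (fun h => absurd h h0)

theorem ncard_disjOcc_le_ncard_inter_flipSet {n : ℕ} {A B : Set (Fin n → Bool)}
    (hA : IncreasingEvent A) (hB : IncreasingEvent B) :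
    (disjOcc A B).ncard ≤ (A ∩ flipSet B).ncard := by
  induction n with
  | zero =>
    refine Set.ncard_le_ncard ?_
    rintro x ⟨I, J, -, hI, hJ⟩
    exact ⟨hI x fun _ _ => rfl, mem_flipSet_iff.mpr <| hJ _ fun i => i.elim0⟩
  | succ n ih =>
    set C := disjOcc (headSlice false A) (headSlice true B)
    set D := disjOcc (headSlice true A) (headSlice false B)
    have h_false : headSlice false (disjOcc A B) ⊆ C ∩ D := fun x hx =>
      have hx' := headSlice_disjOcc_subset A B false hx
      ⟨disjOcc_mono subset_rfl hB.headSlice_false_subset hx',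
        disjOcc_mono hA.headSlice_false_subset subset_rfl hx'⟩
    calc (disjOcc A B).ncard
        = (headSlice false (disjOcc A B)).ncard + (headSlice true (disjOcc A B)).ncard :=
          ncard_eq_ncard_headSlice_add _
      _ ≤ (C ∩ D).ncard + (C ∪ D).ncard :=
          add_le_add (Set.ncard_le_ncard h_false)
            (Set.ncard_le_ncard (headSlice_disjOcc_subset_union A B true))
      _ = C.ncard + D.ncard := by rw [add_comm, Set.ncard_union_add_ncard_inter]
      _ ≤ (headSlice false A ∩ flipSet (headSlice true B)).ncard
            + (headSlice true A ∩ flipSet (headSlice false B)).ncard :=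
          add_le_add (ih (hA.headSlice false) (hB.headSlice true))
            (ih (hA.headSlice true) (hB.headSlice false))
      _ = (A ∩ flipSet B).ncard := by
          rw [ncard_eq_ncard_headSlice_add (A ∩ flipSet B), headSlice_inter_flipSet,
            headSlice_inter_flipSet, Bool.not_false, Bool.not_true]

lemma Pr_eq_ncard_div {n : ℕ} (A : Set (Fin n → Bool)) : Pr A = A.ncard / 2 ^ n := by
  rw [Pr, Set.ncard_eq_toFinset_card']
  congr
  ext
  simp

/-- Reimer's inequality for increasing events: `P[A ∘ B] ≤ P[A ∩ B̄]`. -/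
theorem reimer_increasing {n : ℕ} (A B : Set (Fin n → Bool))
    (hA : IncreasingEvent A) (hB : IncreasingEvent B) :
    Pr (disjOcc A B) ≤ Pr (A ∩ flipSet B) := by
  rw [Pr_eq_ncard_div, Pr_eq_ncard_div]
  exact div_le_div_of_nonneg_right (mod_cast ncard_disjOcc_le_ncard_inter_flipSet hA hB)
    (by positivity)
end

section
/- (Strong BK inequality) For increasing events A, B ⊆ {0,1}^n, P[A ∘ B] ≤ P[(A,B) occurs disjointly on (ω, ξ)], where ω and ξ are independent uniform configurations; in particular P[A ∘ B] ≤ P[A]·P[B]. -/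
open Finset

attribute [local instance] Classical.propDecidable

/-- Probability that `(A,B)` occurs disjointly on an independent uniform pair `(ω, ξ)`. -/
noncomputable def PrPairDisj {n : ℕ} (A B : Set (Fin n → Bool)) : ℝ :=
  (∑ x : Fin n → Bool, ∑ y : Fin n → Bool,
    if OccursDisjointly A B x y then (1:ℝ) else 0) / (2 ^ n * 2 ^ n)

/-! Interpolate between `(ω, ω)` and `(ω, ξ)` by replacing the coordinates of the second
configuration by those of `ξ` one at a time. Replacing one more coordinate `k` never lowers the
probability that `(A, B)` occurs disjointly: with all other coordinates fixed, write `f(a, b)`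
for the indicator of disjoint occurrence when the `k`-th coordinates of the pair are `a` and `b`;
then `f(1,1) + f(0,0) ≤ f(1,0) + f(0,1)`. Indeed, occurrence at `(0,0)` implies occurrence at
`(1,0)` and `(0,1)` since `A` and `B` are increasing, and at `(1,1)` the two witness sets are
disjoint, so one of them misses `k` and the corresponding bit may be switched to `0`. -/

open Function

section Update

variable {ι β M : Type*} [DecidableEq ι]

theorem piecewise_update_update_of_notMem {K : Finset ι} {k : ι} (hk : k ∉ K)
    (x y : ι → β) (a b : β) :
    K.piecewise (update y k b) (update x k a) = update (K.piecewise y x) k a := by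
  ext i
  rcases eq_or_ne i k with rfl | hik
  · simp [hk]
  · by_cases hi : i ∈ K <;> simp [hi, hik]

theorem piecewise_insert_update_update {K : Finset ι} {k : ι} (hk : k ∉ K)
    (x y : ι → β) (a b : β) :
    (insert k K).piecewise (update y k b) (update x k a) = update (K.piecewise y x) k b := by
  rw [piecewise_insert, piecewise_update_update_of_notMem hk, update_idem, update_self]

variable [Fintype ι] [Fintype β] [AddCommMonoid M]

theorem Fintype.sum_sum_update (g : (ι → β) → M) (k : ι) :
    ∑ x, ∑ a, g (update x k a) = Fintype.card β • ∑ x, g x := by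
  let e : (ι → β) × β ≃ (ι → β) × β :=
    Involutive.toPerm (fun p => (update p.1 k p.2, p.1 k)) fun p => by simp
  calc ∑ x, ∑ a, g (update x k a) = ∑ p : (ι → β) × β, g (e p).1 :=
        (Fintype.sum_prod_type' _).symm
    _ = ∑ p : (ι → β) × β, g p.1 := e.sum_comp fun p => g p.1
    _ = Fintype.card β • ∑ x, g x := by
        rw [Fintype.sum_prod_type, Finset.smul_sum]
        simp

theorem Fintype.sum_sum_sum_sum_update (G : (ι → β) → (ι → β) → M) (k : ι) :
    ∑ x, ∑ y, ∑ a, ∑ b, G (update x k a) (update y k b)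
      = Fintype.card β • Fintype.card β • ∑ x, ∑ y, G x y := by
  calc ∑ x, ∑ y, ∑ a, ∑ b, G (update x k a) (update y k b)
        = ∑ x, ∑ a, ∑ y, ∑ b, G (update x k a) (update y k b) :=
          Finset.sum_congr rfl fun _ _ => Finset.sum_comm
    _ = Fintype.card β • ∑ x, ∑ a, ∑ y, G (update x k a) y := by
        simp only [Fintype.sum_sum_update, Finset.smul_sum]
    _ = Fintype.card β • Fintype.card β • ∑ x, ∑ y, G x y := by
        rw [Fintype.sum_sum_update (fun x => ∑ y, G x y)]

end Update

section Witness

variable {n : ℕ} {A B : Set (Fin n → Bool)} {x y : Fin n → Bool} {I : Finset (Fin n)}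

theorem IsWitness.mem (h : IsWitness A x I) : x ∈ A :=
  h x fun _ _ => rfl

theorem IsWitness.congr (h : IsWitness A x I) (hxy : ∀ i ∈ I, y i = x i) : IsWitness A y I :=
  fun z hz => h z fun i hi => (hz i hi).trans (hxy i hi)

theorem IsWitness.filter_true (hA : IncreasingEvent A) (h : IsWitness A x I) :
    IsWitness A x (I.filter (x · = true)) := by
  intro z hz
  -- the indicator of the retained coordinates agrees with `x` on `I` and lies below `z`
  refine hA (fun i => decide (i ∈ I.filter (x · = true))) z (fun i => ?_) (h _ fun i hi => ?_)
  · by_cases hi : i ∈ I.filter (x · = true)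
    · simp [hi, hz i hi, (Finset.mem_filter.1 hi).2]
    · simp [hi]
  · cases hxi : x i <;> simp [hi, hxi]

theorem IsWitness.exists_subset_of_le (hA : IncreasingEvent A) (h : IsWitness A x I)
    (hxy : x ≤ y) : ∃ J ⊆ I, IsWitness A y J := by
  refine ⟨_, Finset.filter_subset _ _, (h.filter_true hA).congr fun i hi => ?_⟩
  have hxi : x i = true := (Finset.mem_filter.1 hi).2
  have hyi : true ≤ y i := hxi ▸ hxy i
  exact (top_le_iff.1 hyi).trans hxi.symm

theorem OccursDisjointly.mono (hA : IncreasingEvent A) (hB : IncreasingEvent B)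
    {x' y' : Fin n → Bool} (h : OccursDisjointly A B x y) (hx : x ≤ x') (hy : y ≤ y') :
    OccursDisjointly A B x' y' := by
  obtain ⟨I, J, hIJ, hI, hJ⟩ := h
  obtain ⟨I', hI'I, hI'⟩ := hI.exists_subset_of_le hA hx
  obtain ⟨J', hJ'J, hJ'⟩ := hJ.exists_subset_of_le hB hy
  exact ⟨I', J', hIJ.mono hI'I hJ'J, hI', hJ'⟩

theorem OccursDisjointly.update_right_or_update_left (h : OccursDisjointly A B x y)
    (k : Fin n) (b : Bool) :
    OccursDisjointly A B x (update y k b) ∨ OccursDisjointly A B (update x k b) y := by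
  obtain ⟨I, J, hIJ, hI, hJ⟩ := h
  by_cases hkJ : k ∈ J
  · have hkI : k ∉ I := Finset.disjoint_right.1 hIJ hkJ
    refine .inr ⟨I, J, hIJ, hI.congr fun i hi => ?_, hJ⟩
    exact update_of_ne (ne_of_mem_of_not_mem hi hkI) _ _
  · refine .inl ⟨I, J, hIJ, hI, hJ.congr fun i hi => ?_⟩
    exact update_of_ne (ne_of_mem_of_not_mem hi hkJ) _ _

theorem OccursDisjointly.mem_left (h : OccursDisjointly A B x y) : x ∈ A :=
  let ⟨_, _, _, hI, _⟩ := h; hI.mem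

theorem OccursDisjointly.mem_right (h : OccursDisjointly A B x y) : y ∈ B :=
  let ⟨_, _, _, _, hJ⟩ := h; hJ.mem

theorem indicator_occursDisjointly_diag_le_offdiag (hA : IncreasingEvent A)
    (hB : IncreasingEvent B) (x y : Fin n → Bool) (k : Fin n) :
    (if OccursDisjointly A B (update x k true) (update y k true) then (1 : ℝ) else 0)
        + (if OccursDisjointly A B (update x k false) (update y k false) then 1 else 0)
      ≤ (if OccursDisjointly A B (update x k true) (update y k false) then 1 else 0)
        + (if OccursDisjointly A B (update x k false) (update y k true) then 1 else 0) := by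
  have hle : ∀ z : Fin n → Bool, update z k false ≤ update z k true :=
    fun z => update_mono (Bool.false_le true)
  have h00 (h : OccursDisjointly A B (update x k false) (update y k false)) :
      OccursDisjointly A B (update x k true) (update y k false) ∧
        OccursDisjointly A B (update x k false) (update y k true) :=
    ⟨h.mono hA hB (hle x) le_rfl, h.mono hA hB le_rfl (hle y)⟩
  have h11 (h : OccursDisjointly A B (update x k true) (update y k true)) :
      OccursDisjointly A B (update x k true) (update y k false) ∨
        OccursDisjointly A B (update x k false) (update y k true) := by
    simpa only [update_idem] using h.update_right_or_update_left k false
  split_ifs <;> simp_all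

end Witness

section Resampling

variable {n : ℕ} {A B : Set (Fin n → Bool)}

noncomputable def resampledDisjCount (A B : Set (Fin n → Bool)) (K : Finset (Fin n)) : ℝ :=
  ∑ x, ∑ y, if OccursDisjointly A B x (K.piecewise y x) then 1 else 0

theorem resampledDisjCount_le_insert (hA : IncreasingEvent A) (hB : IncreasingEvent B)
    {K : Finset (Fin n)} {k : Fin n} (hk : k ∉ K) :
    resampledDisjCount A B K ≤ resampledDisjCount A B (insert k K) := by
  suffices h : Fintype.card Bool • Fintype.card Bool • resampledDisjCount A B K
      ≤ Fintype.card Bool • Fintype.card Bool • resampledDisjCount A B (insert k K) by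
    simpa using h
  simp only [resampledDisjCount]
  rw [← Fintype.sum_sum_sum_sum_update
      (fun x y => if OccursDisjointly A B x (K.piecewise y x) then (1 : ℝ) else 0) k,
    ← Fintype.sum_sum_sum_sum_update
      (fun x y => if OccursDisjointly A B x ((insert k K).piecewise y x) then (1 : ℝ) else 0) k]
  refine Finset.sum_le_sum fun x _ => Finset.sum_le_sum fun y _ => ?_
  simp only [Fintype.sum_bool, piecewise_update_update_of_notMem hk,
    piecewise_insert_update_update hk]
  linarith [indicator_occursDisjointly_diag_le_offdiag hA hB x (K.piecewise y x) k]

theorem resampledDisjCount_empty_le (hA : IncreasingEvent A) (hB : IncreasingEvent B)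
    (K : Finset (Fin n)) : resampledDisjCount A B ∅ ≤ resampledDisjCount A B K := by
  induction K using Finset.induction_on with
  | empty => exact le_rfl
  | insert k K hk ih => exact ih.trans (resampledDisjCount_le_insert hA hB hk)

theorem Pr_disjOcc_eq_resampledDisjCount_empty (A B : Set (Fin n → Bool)) :
    Pr (disjOcc A B) = resampledDisjCount A B ∅ / (2 ^ n * 2 ^ n) := by
  simp only [Pr, resampledDisjCount, disjOcc, piecewise_empty, sum_const, card_univ,
    Fintype.card_fun, Fintype.card_bool, Fintype.card_fin, nsmul_eq_mul, ← mul_sum, sum_boole,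
    Nat.cast_pow, Nat.cast_ofNat]
  field_simp
  rfl

theorem PrPairDisj_eq_resampledDisjCount_univ (A B : Set (Fin n → Bool)) :
    PrPairDisj A B = resampledDisjCount A B univ / (2 ^ n * 2 ^ n) := by
  simp only [PrPairDisj, resampledDisjCount, piecewise_univ]

theorem PrPairDisj_le_Pr_mul_Pr (A B : Set (Fin n → Bool)) : PrPairDisj A B ≤ Pr A * Pr B := by
  rw [PrPairDisj, Pr, Pr, div_mul_div_comm]
  gcongr
  simp only [← sum_boole, sum_mul_sum]
  refine sum_le_sum fun x _ => sum_le_sum fun y _ => ?_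
  by_cases h : OccursDisjointly A B x y
  · simp [h, h.mem_left, h.mem_right]
  · simp only [h, if_false]
    positivity

end Resampling

/-- Strong BK inequality for increasing events:
`P[A ∘ B] ≤ P[(A,B) occurs disjointly on (ω,ξ)] ≤ P[A]·P[B]`. -/
theorem strong_BK {n : ℕ} (A B : Set (Fin n → Bool))
    (hA : IncreasingEvent A) (hB : IncreasingEvent B) :
    Pr (disjOcc A B) ≤ PrPairDisj A B ∧ PrPairDisj A B ≤ Pr A * Pr B := by
  refine ⟨?_, PrPairDisj_le_Pr_mul_Pr A B⟩
  rw [Pr_disjOcc_eq_resampledDisjCount_empty, PrPairDisj_eq_resampledDisjCount_univ]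
  gcongr
  exact resampledDisjCount_empty_le hA hB univ
end
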